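/- arXiv:2602.00511 — 3 statements merged into one kernel-verified Lean document; each statement's English description precedes it below -/
import Mathlib

section
/- Let K ⊆ ℝ^d, k ≥ 2, and let p = (p_1, ..., p_k) : K → ℝ^k be continuous with p_i(x) > 0 for all i and ∑_{i=1}^k p_i(x) = 1 for all x ∈ K. Define γ_i(x) = p_i(x) / ∑_{j=i}^k p_j(x) and φ_i(x) = log(γ_i(x)/(1-γ_i(x))) for 1 ≤ i ≤ k-1. Then each φ_i is continuous on K, and the PUNN partition functions h_1, ..., h_k built from the sigmoid gates g_i(x) = 1/(1 + exp(-φ_i(x))) satisfy h_i(x) = p_i(x) for every x ∈ K and every i ∈ {1, ..., k}. -/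
/-!
With the tail sums `S i = ∑_{j=i}^k p j` one has `γ i = p i / S i`, whose odds are
`p i / S (i+1)`. Hence `φ i = log (p i / S (i+1))` is continuous, and the sigmoid gate is
`g i = p i / (p i + S (i+1)) = p i / S i`. Then `1 - g j = S (j+1) / S j`, so the product
`∏_{j<i} (1 - g j)` telescopes to `S i / S 1 = S i`, and `h i = S i * (p i / S i) = p i`
(and `h k = S k = p k`).
-/

/-- PUNN partition functions: given `k` and gates `g 1, …, g (k-1) : X → ℝ`, define
`h 1 = g 1`, `h i = (∏_{j=1}^{i-1} (1 - g j)) * g i` for `2 ≤ i ≤ k-1`, and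
`h k = ∏_{j=1}^{k-1} (1 - g j)`. -/
noncomputable def punnH {X : Type*} (k : ℕ) (g : ℕ → X → ℝ) (i : ℕ) (x : X) : ℝ :=
  if i = k then ∏ j ∈ Finset.Ico 1 k, (1 - g j x)
  else (∏ j ∈ Finset.Ico 1 i, (1 - g j x)) * g i x

open Finset Real

lemma div_div_one_sub_div {a s : ℝ} (hs : s ≠ 0) : a / s / (1 - a / s) = a / (s - a) := by
  rw [one_sub_div hs, div_div_div_cancel_right₀ hs]

lemma Real.sigmoid_log_div {a b : ℝ} (ha : 0 < a) (hb : 0 < b) :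
    sigmoid (log (a / b)) = a / (a + b) := by
  rw [sigmoid_def, exp_neg, exp_log (div_pos ha hb), inv_div]
  field_simp

lemma mul_prod_Ico_one_sub_div {f T : ℕ → ℝ} {m n : ℕ} (hmn : m ≤ n)
    (hT : ∀ j ∈ Ico m n, T j = f j + T (j + 1)) (hT₀ : ∀ j ∈ Ico m n, T j ≠ 0) :
    T m * ∏ j ∈ Ico m n, (1 - f j / T j) = T n := by
  induction n, hmn using Nat.le_induction with
  | base => simp
  | succ n hmn ih =>
    have hn : n ∈ Ico m (n + 1) := mem_Ico.2 ⟨hmn, n.lt_succ_self⟩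
    have sub : Ico m n ⊆ Ico m (n + 1) := Ico_subset_Ico_right n.le_succ
    rw [prod_Ico_succ_top hmn, ← mul_assoc, ih (fun j hj => hT j (sub hj))
      (fun j hj => hT₀ j (sub hj)), mul_one_sub, mul_div_cancel₀ _ (hT₀ n hn), hT n hn]
    ring

section TailSum

variable {k : ℕ} {q : ℕ → ℝ} {i : ℕ}

def tailSum (k : ℕ) (q : ℕ → ℝ) (i : ℕ) : ℝ := ∑ j ∈ Icc i k, q j

lemma tailSum_eq_add (hik : i ≤ k) : tailSum k q i = q i + tailSum k q (i + 1) := by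
  rw [tailSum, tailSum, Icc_eq_cons_Ioc hik, sum_cons, Icc_add_one_left_eq_Ioc]

lemma tailSum_self : tailSum k q k = q k := by
  simp [tailSum]

lemma tailSum_pos (hik : i ≤ k) (hq : ∀ j ∈ Icc i k, 0 < q j) : 0 < tailSum k q i :=
  sum_pos hq (nonempty_Icc.2 hik)

lemma div_tailSum_div_one_sub (hi : i < k) (hq : ∀ j ∈ Icc i k, 0 < q j) :
    q i / tailSum k q i / (1 - q i / tailSum k q i) = q i / tailSum k q (i + 1) := by
  rw [div_div_one_sub_div (tailSum_pos hi.le hq).ne', tailSum_eq_add hi.le, add_sub_cancel_left]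

lemma continuousOn_tailSum {X : Type*} [TopologicalSpace X] {p : ℕ → X → ℝ} {K : Set X}
    (hp : ∀ j ∈ Icc i k, ContinuousOn (p j) K) :
    ContinuousOn (fun x => tailSum k (p · x) i) K :=
  continuousOn_finsetSum _ hp

end TailSum

theorem punnH_eq_of_gate_eq_div_tailSum {X : Type*} {k : ℕ} {g p : ℕ → X → ℝ} {x : X}
    (hpos : ∀ i ∈ Icc 1 k, 0 < p i x) (hsum : ∑ i ∈ Icc 1 k, p i x = 1)
    (hg : ∀ j ∈ Ico 1 k, g j x = p j x / tailSum k (p · x) j) {i : ℕ} (hi : i ∈ Icc 1 k) :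
    punnH k g i x = p i x := by
  obtain ⟨hi₁, hik⟩ := mem_Icc.1 hi
  have hS : ∀ j ∈ Icc 1 k, 0 < tailSum k (p · x) j := fun j hj =>
    tailSum_pos (mem_Icc.1 hj).2 fun l hl => hpos l (Icc_subset_Icc_left (mem_Icc.1 hj).1 hl)
  have hprod : ∏ j ∈ Ico 1 i, (1 - g j x) = tailSum k (p · x) i := by
    have hsub : Ico 1 i ⊆ Icc 1 k := Ico_subset_Ico_right hik |>.trans Ico_subset_Icc_self
    calc ∏ j ∈ Ico 1 i, (1 - g j x)
        = tailSum k (p · x) 1 * ∏ j ∈ Ico 1 i, (1 - p j x / tailSum k (p · x) j) := by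
          rw [show tailSum k (p · x) 1 = 1 from hsum, one_mul]
          exact prod_congr rfl fun j hj => by rw [hg j (Ico_subset_Ico_right hik hj)]
      _ = tailSum k (p · x) i := mul_prod_Ico_one_sub_div hi₁
          (fun j hj => tailSum_eq_add (mem_Icc.1 (hsub hj)).2) fun j hj => (hS j (hsub hj)).ne'
  unfold punnH
  split_ifs with hi_eq
  · subst hi_eq
    rw [hprod, tailSum_self]
  · rw [hprod, hg i (mem_Ico.2 ⟨hi₁, lt_of_le_of_ne hik hi_eq⟩),
      mul_div_cancel₀ _ (hS i hi).ne']

theorem punn_sigmoid_exact_realizability_general (d k : ℕ)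
    (K : Set (EuclideanSpace ℝ (Fin d)))
    (p : ℕ → EuclideanSpace ℝ (Fin d) → ℝ)
    (hp_cont : ∀ i ∈ Finset.Icc 1 k, ContinuousOn (p i) K)
    (hp_pos : ∀ i ∈ Finset.Icc 1 k, ∀ x ∈ K, 0 < p i x)
    (hp_sum : ∀ x ∈ K, ∑ i ∈ Finset.Icc 1 k, p i x = 1)
    (γ φ : ℕ → EuclideanSpace ℝ (Fin d) → ℝ)
    (hγ : ∀ i ∈ Finset.Icc 1 (k - 1), ∀ x ∈ K,
      γ i x = p i x / ∑ j ∈ Finset.Icc i k, p j x)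
    (hφ : ∀ i ∈ Finset.Icc 1 (k - 1), ∀ x ∈ K,
      φ i x = Real.log (γ i x / (1 - γ i x))) :
    (∀ i ∈ Finset.Icc 1 (k - 1), ContinuousOn (φ i) K) ∧
    (∀ x ∈ K, ∀ i ∈ Finset.Icc 1 k,
      punnH k (fun j y => 1 / (1 + Real.exp (-(φ j y)))) i x = p i x) := by
  have hpos_from : ∀ i ≥ 1, ∀ x ∈ K, ∀ j ∈ Icc i k, 0 < p j x :=
    fun i hi x hx j hj => hp_pos j (Icc_subset_Icc_left hi hj) x hx
  have hS : ∀ i ∈ Icc 1 (k - 1), ∀ x ∈ K, 0 < tailSum k (p · x) (i + 1) := fun i hi x hx =>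
    tailSum_pos (by have := mem_Icc.1 hi; omega) (hpos_from (i + 1) (by omega) x hx)
  have hφ_eq : ∀ i ∈ Icc 1 (k - 1), ∀ x ∈ K,
      φ i x = log (p i x / tailSum k (p · x) (i + 1)) := by
    intro i hi x hx
    obtain ⟨hi₁, hik⟩ := mem_Icc.1 hi
    rw [hφ i hi x hx, hγ i hi x hx]
    exact congrArg log <| div_tailSum_div_one_sub (by omega) (hpos_from i hi₁ x hx)
  refine ⟨fun i hi => ?_, fun x hx i hi => ?_⟩
  · obtain ⟨hi₁, hik⟩ := mem_Icc.1 hi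
    have hp_i : i ∈ Icc 1 k := mem_Icc.2 ⟨hi₁, by omega⟩
    refine ContinuousOn.congr (((hp_cont i hp_i).div (continuousOn_tailSum fun j hj =>
      hp_cont j (Icc_subset_Icc_left (by omega) hj)) fun x hx => (hS i hi x hx).ne').log
      fun x hx => (div_pos (hp_pos i hp_i x hx) (hS i hi x hx)).ne') (hφ_eq i hi)
  · refine punnH_eq_of_gate_eq_div_tailSum (fun i hi => hp_pos i hi x hx) (hp_sum x hx)
      (fun j hj => ?_) hi
    obtain ⟨hj₁, hjk⟩ := mem_Ico.1 hj
    have hj' : j ∈ Icc 1 (k - 1) := mem_Icc.2 ⟨hj₁, by omega⟩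
    rw [one_div, ← sigmoid_def, hφ_eq j hj' x hx, sigmoid_log_div
      (hp_pos j (mem_Icc.2 ⟨hj₁, hjk.le⟩) x hx) (hS j hj' x hx),
      ← tailSum_eq_add (q := (p · x)) hjk.le]

/-- Let `p : K → ℝ^k` be a continuous probability map with strictly positive
coordinates summing to `1`.  With `γ i x = p i x / ∑_{j=i}^k p j x` and
`φ i x = log (γ i x / (1 - γ i x))`, each `φ i` is continuous on `K`, and the
PUNN partition functions built from the sigmoid gates
`g i x = 1 / (1 + exp (−φ i x))` satisfy `h i x = p i x` on `K`. -/
theorem punn_sigmoid_exact_realizability (d k : ℕ) (hk : 2 ≤ k)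
    (K : Set (EuclideanSpace ℝ (Fin d)))
    (p : ℕ → EuclideanSpace ℝ (Fin d) → ℝ)
    (hp_cont : ∀ i ∈ Finset.Icc 1 k, ContinuousOn (p i) K)
    (hp_pos : ∀ i ∈ Finset.Icc 1 k, ∀ x ∈ K, 0 < p i x)
    (hp_sum : ∀ x ∈ K, ∑ i ∈ Finset.Icc 1 k, p i x = 1)
    (γ φ : ℕ → EuclideanSpace ℝ (Fin d) → ℝ)
    (hγ : ∀ i ∈ Finset.Icc 1 (k - 1), ∀ x ∈ K,
      γ i x = p i x / ∑ j ∈ Finset.Icc i k, p j x)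
    (hφ : ∀ i ∈ Finset.Icc 1 (k - 1), ∀ x ∈ K,
      φ i x = Real.log (γ i x / (1 - γ i x))) :
    (∀ i ∈ Finset.Icc 1 (k - 1), ContinuousOn (φ i) K) ∧
    (∀ x ∈ K, ∀ i ∈ Finset.Icc 1 k,
      punnH k (fun j y => 1 / (1 + Real.exp (-(φ j y)))) i x = p i x) :=
  punn_sigmoid_exact_realizability_general d k K p hp_cont hp_pos hp_sum γ φ hγ hφ
end

section
/- Let k ≥ 2, let X be a set, and let g_1, ..., g_{k-1} and g̃_1, ..., g̃_{k-1} be functions from X to ℝ all taking values in [0,1]. Let h_1, ..., h_k and h̃_1, ..., h̃_k denote the PUNN partition functions built from the gates g_j and g̃_j respectively. Then for every x ∈ X and every i ∈ {1, ..., k}, |h̃_i(x) − h_i(x)| ≤ ∑_{j=1}^{min(i, k-1)} |g̃_j(x) − g_j(x)|. -/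
open Finset

theorem Finset.norm_prod_sub_prod_le_sum {ι R : Type*} [NormedCommRing R] [NormOneClass R]
    (s : Finset ι) {f f' : ι → R} (hf : ∀ j ∈ s, ‖f j‖ ≤ 1) (hf' : ∀ j ∈ s, ‖f' j‖ ≤ 1) :
    ‖∏ j ∈ s, f' j - ∏ j ∈ s, f j‖ ≤ ∑ j ∈ s, ‖f' j - f j‖ := by
  induction s using Finset.cons_induction with
  | empty => simp
  | cons a s ha ih =>
    rw [forall_mem_cons] at hf hf'
    have hprod : ‖∏ j ∈ s, f j‖ ≤ 1 :=
      (norm_prod_le _ _).trans (prod_le_one (fun _ _ ↦ norm_nonneg _) hf.2)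
    rw [prod_cons, prod_cons, sum_cons]
    calc ‖f' a * ∏ j ∈ s, f' j - f a * ∏ j ∈ s, f j‖
        = ‖f' a * (∏ j ∈ s, f' j - ∏ j ∈ s, f j) + (f' a - f a) * ∏ j ∈ s, f j‖ := by
          congr 1; ring
      _ ≤ ‖f' a‖ * ‖∏ j ∈ s, f' j - ∏ j ∈ s, f j‖ + ‖f' a - f a‖ * ‖∏ j ∈ s, f j‖ :=
          (norm_add_le _ _).trans (add_le_add (norm_mul_le _ _) (norm_mul_le _ _))
      _ ≤ 1 * ∑ j ∈ s, ‖f' j - f j‖ + ‖f' a - f a‖ * 1 := by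
          gcongr
          exacts [hf'.1, ih hf.2 hf'.2]
      _ = ‖f' a - f a‖ + ∑ j ∈ s, ‖f' j - f j‖ := by ring

def punnFactor {X : Type*} (g : ℕ → X → ℝ) (i j : ℕ) (x : X) : ℝ :=
  if j = i then g j x else 1 - g j x

theorem prod_Ico_punnFactor {X : Type*} (g : ℕ → X → ℝ) (i : ℕ) (x : X) :
    ∏ j ∈ Ico 1 i, punnFactor g i j x = ∏ j ∈ Ico 1 i, (1 - g j x) :=
  prod_congr rfl fun _ hj ↦ if_neg (mem_Ico.mp hj).2.ne

theorem punnH_eq_prod {X : Type*} {k i : ℕ} (g : ℕ → X → ℝ) (x : X) (hi : i ∈ Icc 1 k) :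
    punnH k g i x = ∏ j ∈ Icc 1 (min i (k - 1)), punnFactor g i j x := by
  rw [mem_Icc] at hi
  unfold punnH
  split_ifs with hik
  · subst hik
    have hIcc : Icc 1 (i - 1) = Ico 1 i := by ext; simp only [mem_Ico, mem_Icc]; omega
    rw [min_eq_right (Nat.sub_le i 1), hIcc, prod_Ico_punnFactor g i x]
  · rw [min_eq_left (by omega), ← Ico_insert_right hi.1, prod_insert right_notMem_Ico,
      prod_Ico_punnFactor g i x, mul_comm, punnFactor, if_pos rfl]

theorem abs_punnFactor_sub {X : Type*} (g g' : ℕ → X → ℝ) (i j : ℕ) (x : X) :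
    |punnFactor g' i j x - punnFactor g i j x| = |g' j x - g j x| := by
  unfold punnFactor
  split_ifs
  · rfl
  · rw [sub_sub_sub_cancel_left, abs_sub_comm]

theorem abs_punnFactor_le_one {X : Type*} {g : ℕ → X → ℝ} {i j : ℕ} {x : X}
    (hg : g j x ∈ Set.Icc (0 : ℝ) 1) : |punnFactor g i j x| ≤ 1 := by
  obtain ⟨h0, h1⟩ := hg
  unfold punnFactor
  split_ifs <;> rw [abs_le] <;> constructor <;> linarith

theorem punn_partition_stability_general {X : Type*} (k : ℕ)
    (g g' : ℕ → X → ℝ)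
    (hg : ∀ j ∈ Finset.Icc 1 (k - 1), ∀ x, g j x ∈ Set.Icc (0 : ℝ) 1)
    (hg' : ∀ j ∈ Finset.Icc 1 (k - 1), ∀ x, g' j x ∈ Set.Icc (0 : ℝ) 1) :
    ∀ x, ∀ i ∈ Finset.Icc 1 k,
      |punnH k g' i x - punnH k g i x|
        ≤ ∑ j ∈ Finset.Icc 1 (min i (k - 1)), |g' j x - g j x| := by
  intro x i hi
  have hsub : Icc 1 (min i (k - 1)) ⊆ Icc 1 (k - 1) := Icc_subset_Icc le_rfl (min_le_right _ _)
  rw [punnH_eq_prod g' x hi, punnH_eq_prod g x hi]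
  simp_rw [← abs_punnFactor_sub g g' i, ← Real.norm_eq_abs]
  exact norm_prod_sub_prod_le_sum _
    (fun j hj ↦ abs_punnFactor_le_one (hg j (hsub hj) x))
    (fun j hj ↦ abs_punnFactor_le_one (hg' j (hsub hj) x))

/-- Stability of the PUNN partition functions under gate perturbations: if the
gates `g j` and `g̃ j` all take values in `[0,1]`, then for every `x` and every
`i ∈ {1, …, k}`,
`|h̃ i x − h i x| ≤ ∑_{j=1}^{min(i, k-1)} |g̃ j x − g j x|`. -/
theorem punn_partition_stability {X : Type*} (k : ℕ) (hk : 2 ≤ k)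
    (g g' : ℕ → X → ℝ)
    (hg : ∀ j ∈ Finset.Icc 1 (k - 1), ∀ x, g j x ∈ Set.Icc (0 : ℝ) 1)
    (hg' : ∀ j ∈ Finset.Icc 1 (k - 1), ∀ x, g' j x ∈ Set.Icc (0 : ℝ) 1) :
    ∀ x, ∀ i ∈ Finset.Icc 1 k,
      |punnH k g' i x - punnH k g i x|
        ≤ ∑ j ∈ Finset.Icc 1 (min i (k - 1)), |g' j x - g j x| :=
  punn_partition_stability_general k g g' hg hg'
end

section
/- Let K ⊆ ℝ^d be a nonempty compact set, let k ≥ 2, and let p = (p_1, ..., p_k) : K → ℝ^k be continuous with p_i(x) > 0 for all i and ∑_{i=1}^k p_i(x) = 1 for all x ∈ K. Let g : ℝ → ℝ be continuous, strictly monotone, with range exactly the open interval (0,1). Let D be a set of continuous functions from K to ℝ that is dense in the sup norm (for every continuous φ : K → ℝ and every δ > 0 there exists θ ∈ D with sup_{x∈K} |θ(x) − φ(x)| < δ). Then for every ε > 0 there exist θ_1, ..., θ_{k-1} ∈ D such that the PUNN partition functions h_1, ..., h_k built from the gates g_i(x) = g(θ_i(x)) satisfy max_{1≤i≤k} sup_{x∈K}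 |h_i(x) − p_i(x)| < ε. -/
/-!
The stick-breaking gates `G i = p i / (p i + ⋯ + p k)` reproduce `p` exactly, since
`∏_{j<i} (1 - G j) = p i + ⋯ + p k` telescopes, and positivity of `p` puts `G i` (`i < k`) into
`(0,1) = range g`. A strictly monotone `g` whose range is an interval is a topological
embedding, so `G i = g ∘ φ i` with `φ i` continuous on `K`; density of `D` and uniform continuity
of `g` near the compact set `φ i '' K` give `θ i ∈ D` with `g ∘ θ i` uniformly `η`-close to `G i`.
With all gates in `[0,1]`, `punnH` is `1`-Lipschitz in each gate, so the partition functions are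
`(k - 1) η`-close to `p`.
-/

open Finset Topology

theorem ContinuousOn.le_biSup {X : Type*} [TopologicalSpace X] {K : Set X} {F : X → ℝ}
    (hF : ContinuousOn F K) (hK : IsCompact K) {x : X} (hx : x ∈ K) :
    F x ≤ ⨆ y ∈ K, F y :=
  le_ciSup₂ (f := fun y (_ : y ∈ K) => F y)
    ((hK.bddAbove_image hF).mono <| by
      rintro _ ⟨_, ⟨y, rfl⟩, hy, rfl⟩
      exact Set.mem_image_of_mem F hy) x hx

theorem Topology.IsEmbedding.continuousOn_invFun {X Y : Type*} [TopologicalSpace X]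
    [TopologicalSpace Y] [Nonempty X] {f : X → Y} (hf : IsEmbedding f) :
    ContinuousOn (Function.invFun f) (Set.range f) := by
  rw [continuousOn_iff_continuous_domRestrict]
  convert hf.toHomeomorph.symm.continuous
  funext ⟨_, x, rfl⟩
  simp [Function.leftInverse_invFun hf.injective x, hf.toHomeomorph_symm_apply]

theorem Real.isEmbedding_of_strictMono_or_strictAnti {g : ℝ → ℝ}
    (hg : StrictMono g ∨ StrictAnti g) (hc : (Set.range g).OrdConnected) : IsEmbedding g := by
  rcases hg with hmono | hanti
  · exact hmono.isEmbedding_of_ordConnected hc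
  · have hmono : StrictMono (g ∘ Neg.neg) := hanti.comp fun _ _ h => neg_lt_neg h
    have hneg := hmono.isEmbedding_of_ordConnected (by rwa [neg_surjective.range_comp])
    simpa [Function.comp_def] using hneg.comp (Homeomorph.neg ℝ).isEmbedding

section Approximation

variable {X : Type*} [TopologicalSpace X] {K : Set X} {D : Set (X → ℝ)}

theorem exists_mem_forall_abs_sub_lt (hK : IsCompact K) (hD_cont : ∀ f ∈ D, ContinuousOn f K)
    (hD_dense : ∀ φ : X → ℝ, ContinuousOn φ K → ∀ δ > 0, ∃ θ ∈ D, (⨆ x ∈ K, |θ x - φ x|) < δ)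
    {φ : X → ℝ} (hφ : ContinuousOn φ K) {δ : ℝ} (hδ : 0 < δ) :
    ∃ θ ∈ D, ∀ x ∈ K, |θ x - φ x| < δ := by
  obtain ⟨θ, hθD, hθ⟩ := hD_dense φ hφ δ hδ
  -- the real `⨆` of an unbounded family is `0`: continuity of `θ - φ` on `K` is what bounds it
  exact ⟨θ, hθD, fun x hx => (((hD_cont θ hθD).sub hφ).abs.le_biSup hK hx).trans_lt hθ⟩

theorem exists_mem_forall_abs_comp_sub_comp_lt (hK : IsCompact K)
    (hD_cont : ∀ f ∈ D, ContinuousOn f K)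
    (hD_dense : ∀ φ : X → ℝ, ContinuousOn φ K → ∀ δ > 0, ∃ θ ∈ D, (⨆ x ∈ K, |θ x - φ x|) < δ)
    {g : ℝ → ℝ} (hg : Continuous g) {φ : X → ℝ} (hφ : ContinuousOn φ K) {η : ℝ} (hη : 0 < η) :
    ∃ θ ∈ D, ∀ x ∈ K, |g (θ x) - g (φ x)| < η := by
  obtain ⟨δ, hδ, hgδ⟩ := Metric.mem_uniformity_dist.mp <|
    (hK.image_of_continuousOn hφ).uniformContinuousAt_of_continuousAt g
      (fun _ _ => hg.continuousAt) (Metric.dist_mem_uniformity hη)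
  obtain ⟨θ, hθD, hθ⟩ := exists_mem_forall_abs_sub_lt hK hD_cont hD_dense hφ hδ
  refine ⟨θ, hθD, fun x hx => ?_⟩
  rw [abs_sub_comm]
  exact hgδ (by rw [Real.dist_eq, abs_sub_comm]; exact hθ x hx) (Set.mem_image_of_mem φ hx)

theorem exists_mem_forall_abs_comp_sub_lt (hK : IsCompact K)
    (hD_cont : ∀ f ∈ D, ContinuousOn f K)
    (hD_dense : ∀ φ : X → ℝ, ContinuousOn φ K → ∀ δ > 0, ∃ θ ∈ D, (⨆ x ∈ K, |θ x - φ x|) < δ)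
    {g : ℝ → ℝ} (hg : IsEmbedding g) {ψ : X → ℝ} (hψ : ContinuousOn ψ K)
    (hψg : ∀ x ∈ K, ψ x ∈ Set.range g) {η : ℝ} (hη : 0 < η) :
    ∃ θ ∈ D, ∀ x ∈ K, |g (θ x) - ψ x| < η := by
  obtain ⟨θ, hθD, hθ⟩ := exists_mem_forall_abs_comp_sub_comp_lt hK hD_cont hD_dense
    hg.continuous (hg.continuousOn_invFun.comp hψ hψg) hη
  exact ⟨θ, hθD, fun x hx => by simpa [Function.invFun_eq (hψg x hx)] using hθ x hx⟩

end Approximation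

theorem norm_mul_sub_mul_le_of_norm_le_one {R : Type*} [NonUnitalSeminormedRing R] {a b c d : R}
    (ha : ‖a‖ ≤ 1) (hd : ‖d‖ ≤ 1) : ‖a * b - c * d‖ ≤ ‖a - c‖ + ‖b - d‖ :=
  calc ‖a * b - c * d‖ = ‖a * (b - d) + (a - c) * d‖ := by noncomm_ring
    _ ≤ ‖a‖ * ‖b - d‖ + ‖a - c‖ * ‖d‖ := norm_add_le_of_le (norm_mul_le _ _) (norm_mul_le _ _)
    _ ≤ 1 * ‖b - d‖ + ‖a - c‖ * 1 := by gcongr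
    _ = ‖a - c‖ + ‖b - d‖ := by ring

theorem Finset.norm_prod_sub_prod_le {ι R : Type*} [NormedCommRing R] [NormOneClass R]
    (s : Finset ι) {a b : ι → R} (ha : ∀ i ∈ s, ‖a i‖ ≤ 1) (hb : ∀ i ∈ s, ‖b i‖ ≤ 1) :
    ‖∏ i ∈ s, a i - ∏ i ∈ s, b i‖ ≤ ∑ i ∈ s, ‖a i - b i‖ := by
  classical
  induction s using Finset.induction_on with
  | empty => simp
  | insert j s hj ih =>
    rw [forall_mem_insert] at ha hb
    rw [prod_insert hj, prod_insert hj, sum_insert hj]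
    have hprod : ‖∏ i ∈ s, b i‖ ≤ 1 :=
      (norm_prod_le s b).trans (prod_le_one (fun _ _ => norm_nonneg _) hb.2)
    grw [norm_mul_sub_mul_le_of_norm_le_one ha.1 hprod, ih ha.2 hb.2]

theorem abs_punnH_sub_punnH_le {X : Type*} {k i : ℕ} {a b : ℕ → X → ℝ} {x : X}
    (hi : i ∈ Icc 1 k) (ha : ∀ j ∈ Ico 1 k, a j x ∈ Set.Icc 0 1)
    (hb : ∀ j ∈ Ico 1 k, b j x ∈ Set.Icc 0 1) :
    |punnH k a i x - punnH k b i x| ≤ ∑ j ∈ Ico 1 k, |a j x - b j x| := by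
  obtain ⟨hi1, hik⟩ := mem_Icc.mp hi
  have hsub : ∀ {n}, n ≤ k → Ico 1 n ⊆ Ico 1 k := fun hn => Ico_subset_Ico_right hn
  have hcompl : ∀ c : ℕ → X → ℝ, (∀ j ∈ Ico 1 k, c j x ∈ Set.Icc 0 1) →
      ∀ j ∈ Ico 1 k, |1 - c j x| ≤ 1 := fun c hc j hj =>
    abs_sub_le_of_nonneg_of_le zero_le_one le_rfl (hc j hj).1 (hc j hj).2
  have hprod : ∀ n ≤ k, |∏ j ∈ Ico 1 n, (1 - a j x) - ∏ j ∈ Ico 1 n, (1 - b j x)| ≤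
      ∑ j ∈ Ico 1 n, |a j x - b j x| := fun n hn =>
    (norm_prod_sub_prod_le _ (fun j hj => hcompl a ha j (hsub hn hj))
      (fun j hj => hcompl b hb j (hsub hn hj))).trans_eq <|
      sum_congr rfl fun j _ => by rw [Real.norm_eq_abs, sub_sub_sub_cancel_left, abs_sub_comm]
  unfold punnH
  split_ifs with h
  · exact hprod k le_rfl
  · have hik' : i < k := lt_of_le_of_ne hik h
    have hprod_le : |∏ j ∈ Ico 1 i, (1 - a j x)| ≤ 1 := by
      rw [abs_prod]
      exact prod_le_one (fun _ _ => abs_nonneg _) fun j hj => hcompl a ha j (hsub hik hj)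
    have hbi : |b i x| ≤ 1 := by
      have := hb i (mem_Ico.mpr ⟨hi1, hik'⟩)
      rw [abs_of_nonneg this.1]; exact this.2
    calc _ ≤ |∏ j ∈ Ico 1 i, (1 - a j x) - ∏ j ∈ Ico 1 i, (1 - b j x)| + |a i x - b i x| :=
          norm_mul_sub_mul_le_of_norm_le_one (R := ℝ) hprod_le hbi
      _ ≤ ∑ j ∈ Ico 1 i, |a j x - b j x| + |a i x - b i x| := by grw [hprod i hik]
      _ = ∑ j ∈ Ico 1 (i + 1), |a j x - b j x| := (sum_Ico_succ_top hi1 _).symm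
      _ ≤ ∑ j ∈ Ico 1 k, |a j x - b j x| :=
          sum_le_sum_of_subset_of_nonneg (hsub hik') fun _ _ _ => abs_nonneg _

theorem Finset.sum_Icc_eq_add_sum_Icc_succ {M : Type*} [AddCommMonoid M] {f : ℕ → M} {a b : ℕ}
    (h : a ≤ b) : ∑ i ∈ Icc a b, f i = f a + ∑ i ∈ Icc (a + 1) b, f i := by
  rw [Icc_add_one_left_eq_Ioc, add_sum_Ioc_eq_sum_Icc h]

section StickBreaking

variable {X : Type*} {k : ℕ} {p : ℕ → X → ℝ} {x : X}

noncomputable def stickBreakingGate (k : ℕ) (p : ℕ → X → ℝ) (i : ℕ) (x : X) : ℝ :=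
  p i x / ∑ j ∈ Icc i k, p j x

theorem sum_Icc_pos_of_pos (hpos : ∀ j ∈ Icc 1 k, 0 < p j x) {i : ℕ} (hi1 : 1 ≤ i) (hik : i ≤ k) :
    0 < ∑ j ∈ Icc i k, p j x :=
  sum_pos (fun j hj => hpos j (Icc_subset_Icc_left hi1 hj)) (nonempty_Icc.mpr hik)

theorem stickBreakingGate_mem_Ioo (hpos : ∀ j ∈ Icc 1 k, 0 < p j x) {i : ℕ} (hi1 : 1 ≤ i)
    (hik : i < k) : stickBreakingGate k p i x ∈ Set.Ioo 0 1 := by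
  have hpi := hpos i (mem_Icc.mpr ⟨hi1, hik.le⟩)
  have htail := sum_Icc_pos_of_pos hpos (hi1.trans i.le_succ) hik
  rw [stickBreakingGate, sum_Icc_eq_add_sum_Icc_succ hik.le]
  exact ⟨by positivity, (div_lt_one (by positivity)).mpr (by linarith)⟩

theorem prod_one_sub_stickBreakingGate (hpos : ∀ j ∈ Icc 1 k, 0 < p j x)
    (hsum : ∑ j ∈ Icc 1 k, p j x = 1) {i : ℕ} (hi1 : 1 ≤ i) (hik : i ≤ k) :
    ∏ j ∈ Ico 1 i, (1 - stickBreakingGate k p j x) = ∑ j ∈ Icc i k, p j x := by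
  induction i, hi1 using Nat.le_induction with
  | base => simp [hsum]
  | succ n hn ih =>
    have hS := sum_Icc_pos_of_pos hpos hn (by omega : n ≤ k)
    rw [prod_Ico_succ_top hn, ih (by omega), stickBreakingGate]
    rw [sum_Icc_eq_add_sum_Icc_succ (by omega : n ≤ k)] at hS ⊢
    field_simp
    ring

theorem punnH_stickBreakingGate (hpos : ∀ j ∈ Icc 1 k, 0 < p j x)
    (hsum : ∑ j ∈ Icc 1 k, p j x = 1) {i : ℕ} (hi : i ∈ Icc 1 k) :
    punnH k (stickBreakingGate k p) i x = p i x := by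
  obtain ⟨hi1, hik⟩ := mem_Icc.mp hi
  have hS := sum_Icc_pos_of_pos hpos hi1 hik
  unfold punnH
  split_ifs with h
  · subst h
    simp [prod_one_sub_stickBreakingGate hpos hsum hi1 le_rfl]
  · rw [prod_one_sub_stickBreakingGate hpos hsum hi1 hik, stickBreakingGate]
    field_simp

theorem continuousOn_stickBreakingGate [TopologicalSpace X] {K : Set X}
    (hcont : ∀ j ∈ Icc 1 k, ContinuousOn (p j) K) (hpos : ∀ j ∈ Icc 1 k, ∀ x ∈ K, 0 < p j x)
    {i : ℕ} (hi1 : 1 ≤ i) (hik : i ≤ k) : ContinuousOn (stickBreakingGate k p i) K :=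
  (hcont i (mem_Icc.mpr ⟨hi1, hik⟩)).div
    (continuousOn_finsetSum _ fun j hj => hcont j (Icc_subset_Icc_left hi1 hj))
    fun x hx => (sum_Icc_pos_of_pos (hpos · · x hx) hi1 hik).ne'

theorem abs_punnH_sub_le_of_abs_sub_stickBreakingGate_le (hpos : ∀ j ∈ Icc 1 k, 0 < p j x)
    (hsum : ∑ j ∈ Icc 1 k, p j x = 1) {a : ℕ → X → ℝ} (ha : ∀ j ∈ Ico 1 k, a j x ∈ Set.Icc 0 1)
    {η : ℝ} (hη : ∀ j ∈ Ico 1 k, |a j x - stickBreakingGate k p j x| ≤ η) {i : ℕ}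
    (hi : i ∈ Icc 1 k) : |punnH k a i x - p i x| ≤ #(Ico 1 k) • η :=
  calc |punnH k a i x - p i x| = |punnH k a i x - punnH k (stickBreakingGate k p) i x| := by
        rw [punnH_stickBreakingGate hpos hsum hi]
    _ ≤ ∑ j ∈ Ico 1 k, |a j x - stickBreakingGate k p j x| :=
        abs_punnH_sub_punnH_le hi ha fun j hj => Set.Ioo_subset_Icc_self <|
          stickBreakingGate_mem_Ioo hpos (mem_Ico.mp hj).1 (mem_Ico.mp hj).2
    _ ≤ #(Ico 1 k) • η := sum_le_card_nsmul _ _ _ hη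

end StickBreaking

theorem punn_density_general_gate_general (d k : ℕ)
    (K : Set (EuclideanSpace ℝ (Fin d))) (hK : IsCompact K)
    (p : ℕ → EuclideanSpace ℝ (Fin d) → ℝ)
    (hp_cont : ∀ i ∈ Finset.Icc 1 k, ContinuousOn (p i) K)
    (hp_pos : ∀ i ∈ Finset.Icc 1 k, ∀ x ∈ K, 0 < p i x)
    (hp_sum : ∀ x ∈ K, ∑ i ∈ Finset.Icc 1 k, p i x = 1)
    (g : ℝ → ℝ)
    (hg_mono : StrictMono g ∨ StrictAnti g)
    (hg_range : Set.range g = Set.Ioo (0 : ℝ) 1)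
    (D : Set (EuclideanSpace ℝ (Fin d) → ℝ))
    (hD_cont : ∀ f ∈ D, ContinuousOn f K)
    (hD_dense : ∀ φ : EuclideanSpace ℝ (Fin d) → ℝ, ContinuousOn φ K →
      ∀ δ > 0, ∃ θ ∈ D, (⨆ x ∈ K, |θ x - φ x|) < δ) :
    ∀ ε > 0, ∃ θ : ℕ → EuclideanSpace ℝ (Fin d) → ℝ,
      (∀ i ∈ Finset.Icc 1 (k - 1), θ i ∈ D) ∧
      ∀ i ∈ Finset.Icc 1 k,
        (⨆ x ∈ K, |punnH k (fun j y => g (θ j y)) i x - p i x|) < ε := by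
  intro ε hε
  have hpos : ∀ x ∈ K, ∀ j ∈ Icc 1 k, 0 < p j x := fun x hx j hj => hp_pos j hj x hx
  have hg_emb : IsEmbedding g :=
    Real.isEmbedding_of_strictMono_or_strictAnti hg_mono (hg_range ▸ Set.ordConnected_Ioo)
  set η : ℝ := ε / (#(Ico 1 k) + 1)
  have hgate : ∀ i ∈ Ico 1 k, ∃ θ ∈ D, ∀ x ∈ K, |g (θ x) - stickBreakingGate k p i x| < η :=
    fun i hi => exists_mem_forall_abs_comp_sub_lt hK hD_cont hD_dense hg_emb
      (continuousOn_stickBreakingGate hp_cont hp_pos (mem_Ico.mp hi).1 (mem_Ico.mp hi).2.le)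
      (fun x hx => hg_range ▸ stickBreakingGate_mem_Ioo (hpos x hx) (mem_Ico.mp hi).1
        (mem_Ico.mp hi).2)
      (by positivity)
  choose! θ hθD hθ using hgate
  refine ⟨θ, fun i hi => hθD i (by simp at hi ⊢; omega), fun i hi => ?_⟩
  have hbound : ∀ x ∈ K, |punnH k (fun j y => g (θ j y)) i x - p i x| ≤ #(Ico 1 k) • η :=
    fun x hx => abs_punnH_sub_le_of_abs_sub_stickBreakingGate_le (hpos x hx) (hp_sum x hx)
      (fun j _ => Set.Ioo_subset_Icc_self (hg_range ▸ Set.mem_range_self _))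
      (fun j hj => (hθ j hj x hx).le) hi
  calc (⨆ x ∈ K, |punnH k (fun j y => g (θ j y)) i x - p i x|) ≤ #(Ico 1 k) • η :=
        Real.iSup_le (fun x => Real.iSup_le (hbound x) (by positivity)) (by positivity)
    _ < ε := by
      rw [nsmul_eq_mul, mul_div_assoc', div_lt_iff₀ (by positivity)]
      nlinarith

/-- Density of PUNN with a general strictly monotone continuous activation
`g : ℝ → ℝ` whose range is exactly `(0,1)`: for a nonempty compact `K ⊆ ℝ^d`, a
continuous probability map `p : K → ri(Δ^{k-1})`, and a sup-norm-dense class `D`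
of continuous functions on `K`, for every `ε > 0` there exist `θ 1, …, θ (k-1)`
in `D` such that the PUNN partition functions built from the gates
`g_i x = g (θ i x)` are uniformly `ε`-close to `p` on `K`. -/
theorem punn_density_general_gate (d k : ℕ) (hk : 2 ≤ k)
    (K : Set (EuclideanSpace ℝ (Fin d))) (hK : IsCompact K) (hne : K.Nonempty)
    (p : ℕ → EuclideanSpace ℝ (Fin d) → ℝ)
    (hp_cont : ∀ i ∈ Finset.Icc 1 k, ContinuousOn (p i) K)
    (hp_pos : ∀ i ∈ Finset.Icc 1 k, ∀ x ∈ K, 0 < p i x)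
    (hp_sum : ∀ x ∈ K, ∑ i ∈ Finset.Icc 1 k, p i x = 1)
    (g : ℝ → ℝ) (hg_cont : Continuous g)
    (hg_mono : StrictMono g ∨ StrictAnti g)
    (hg_range : Set.range g = Set.Ioo (0 : ℝ) 1)
    (D : Set (EuclideanSpace ℝ (Fin d) → ℝ))
    (hD_cont : ∀ f ∈ D, ContinuousOn f K)
    (hD_dense : ∀ φ : EuclideanSpace ℝ (Fin d) → ℝ, ContinuousOn φ K →
      ∀ δ > 0, ∃ θ ∈ D, (⨆ x ∈ K, |θ x - φ x|) < δ) :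
    ∀ ε > 0, ∃ θ : ℕ → EuclideanSpace ℝ (Fin d) → ℝ,
      (∀ i ∈ Finset.Icc 1 (k - 1), θ i ∈ D) ∧
      ∀ i ∈ Finset.Icc 1 k,
        (⨆ x ∈ K, |punnH k (fun j y => g (θ j y)) i x - p i x|) < ε :=
  punn_density_general_gate_general d k K hK p hp_cont hp_pos hp_sum g hg_mono hg_range D hD_cont
    hD_dense
end
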